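/- arXiv:1108.4762 — 2 statements merged into one kernel-verified Lean document; each statement's English description precedes it below -/
import Mathlib

section
/- The formula D(a/b) = (D(a)·b - a·D(b))/b², where D on integers is the arithmetic derivative, is independent of the choice of representation of the fraction: for all integers a and all nonzero integers b, c, one has (D(ac)·bc - ac·D(bc))/(bc)² = (D(a)·b - a·D(b))/b². Consequently there is a well-defined function D : ℚ → ℚ extending the arithmetic derivative on ℤ and satisfying the Leibniz rule D(xy) = D(x)·y + x·D(y) for all rationals x, y. -/
/-- The arithmetic derivative on `ℕ`: `D p = 1` for primes, `D (a*b) = D a * b + a * D b`;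
explicitly `D n = n * Σ αᵢ / pᵢ = Σ αᵢ * (n / pᵢ)` for `n = ∏ pᵢ ^ αᵢ`, and `D 0 = D 1 = 0`. -/
def arithDeriv (n : ℕ) : ℕ := ∑ p ∈ n.primeFactors, n.factorization p * (n / p)

/-- The arithmetic derivative on `ℤ`: the unique odd extension of `arithDeriv`. -/
def intArithDeriv (x : ℤ) : ℤ := x.sign * arithDeriv x.natAbs

/-!
Writing `ℓ n = Σ_p v_p(n) / p` for the logarithmic derivative, one has `D n = n * ℓ n`, and `ℓ`
is completely additive because `v_p` is. Hence `ℓ (num q) - ℓ (den q)` is an additive function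
on `ℚˣ` (by cross-multiplication it can be read off any representation of `q` as a fraction),
and `D q := q * ℓ q` satisfies the Leibniz rule. The representation independence of the
quotient rule is the Leibniz rule on `ℤ` together with cancellation of `c`.
-/

noncomputable def arithLogDeriv (n : ℕ) : ℚ := n.factorization.sum fun p k => (k : ℚ) / p

theorem arithLogDeriv_mul {m n : ℕ} (hm : m ≠ 0) (hn : n ≠ 0) :
    arithLogDeriv (m * n) = arithLogDeriv m + arithLogDeriv n := by
  rw [arithLogDeriv, Nat.factorization_mul hm hn,
    Finsupp.sum_add_index' (fun _ => by simp) (fun _ _ _ => by push_cast; ring)]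
  rfl

theorem arithDeriv_eq_mul_arithLogDeriv (n : ℕ) :
    (arithDeriv n : ℚ) = n * arithLogDeriv n := by
  rw [arithDeriv, arithLogDeriv, Finsupp.sum, Nat.support_factorization, Finset.mul_sum]
  push_cast
  refine Finset.sum_congr rfl fun p hp => ?_
  have hp0 : (p : ℚ) ≠ 0 := by exact_mod_cast (Nat.prime_of_mem_primeFactors hp).ne_zero
  rw [Nat.cast_div (Nat.dvd_of_mem_primeFactors hp) hp0]
  field_simp

theorem intArithDeriv_eq_mul_arithLogDeriv (x : ℤ) :
    (intArithDeriv x : ℚ) = x * arithLogDeriv x.natAbs := by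
  rw [intArithDeriv, Int.cast_mul, Int.cast_natCast, arithDeriv_eq_mul_arithLogDeriv, ← mul_assoc,
    ← Int.cast_natCast, ← Int.cast_mul, Int.sign_mul_natAbs]

theorem intArithDeriv_mul (x y : ℤ) :
    intArithDeriv (x * y) = intArithDeriv x * y + x * intArithDeriv y := by
  rcases eq_or_ne x 0 with rfl | hx
  · simp [intArithDeriv]
  rcases eq_or_ne y 0 with rfl | hy
  · simp [intArithDeriv]
  have key : (intArithDeriv (x * y) : ℚ) = intArithDeriv x * y + x * intArithDeriv y := by
    simp only [intArithDeriv_eq_mul_arithLogDeriv, Int.natAbs_mul,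
      arithLogDeriv_mul (Int.natAbs_ne_zero.2 hx) (Int.natAbs_ne_zero.2 hy), Int.cast_mul]
    ring
  exact_mod_cast key

theorem intArithDeriv_quotient_mul_right (a b c : ℤ) (hb : b ≠ 0) (hc : c ≠ 0) :
    ((intArithDeriv (a * c) : ℚ) * (b * c) - (a * c) * intArithDeriv (b * c)) /
        ((b * c : ℤ) : ℚ) ^ 2 =
      ((intArithDeriv a : ℚ) * b - a * intArithDeriv b) / (b : ℚ) ^ 2 := by
  have hbQ : (b : ℚ) ≠ 0 := Int.cast_ne_zero.mpr hb
  have hcQ : (c : ℚ) ≠ 0 := Int.cast_ne_zero.mpr hc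
  rw [intArithDeriv_mul, intArithDeriv_mul]
  push_cast
  field_simp
  ring

noncomputable def ratArithLogDeriv (q : ℚ) : ℚ :=
  arithLogDeriv q.num.natAbs - arithLogDeriv q.den

theorem ratArithLogDeriv_div {a b : ℤ} (ha : a ≠ 0) (hb : b ≠ 0) :
    ratArithLogDeriv (a / b) = arithLogDeriv a.natAbs - arithLogDeriv b.natAbs := by
  set q : ℚ := a / b
  have hq : q ≠ 0 := div_ne_zero (Int.cast_ne_zero.2 ha) (Int.cast_ne_zero.2 hb)
  have hcross : a * q.den = q.num * b := by
    have : (a : ℚ) * q.den = q.num * b := by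
      rw [← Rat.mul_den_eq_num, mul_comm _ (b : ℚ), ← mul_assoc,
        mul_div_cancel₀ _ (Int.cast_ne_zero.2 hb)]
    exact_mod_cast this
  have hnat := congrArg (arithLogDeriv ∘ Int.natAbs) hcross
  simp only [Function.comp, Int.natAbs_mul, Int.natAbs_natCast] at hnat
  rw [arithLogDeriv_mul (Int.natAbs_ne_zero.2 ha) q.den_nz, arithLogDeriv_mul
    (Int.natAbs_ne_zero.2 (Rat.num_ne_zero.2 hq)) (Int.natAbs_ne_zero.2 hb)] at hnat
  rw [ratArithLogDeriv]
  linarith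

theorem ratArithLogDeriv_mul {x y : ℚ} (hx : x ≠ 0) (hy : y ≠ 0) :
    ratArithLogDeriv (x * y) = ratArithLogDeriv x + ratArithLogDeriv y := by
  have hxy : x * y = ((x.num * y.num : ℤ) : ℚ) / ((x.den * y.den : ℤ) : ℚ) := by
    push_cast; rw [mul_div_mul_comm, Rat.num_div_den, Rat.num_div_den]
  have hnum : x.num * y.num ≠ 0 := mul_ne_zero (Rat.num_ne_zero.2 hx) (Rat.num_ne_zero.2 hy)
  have hden : (x.den * y.den : ℤ) ≠ 0 := by positivity
  rw [hxy, ratArithLogDeriv_div hnum hden, Int.natAbs_mul, Int.natAbs_mul,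
    arithLogDeriv_mul (Int.natAbs_ne_zero.2 (Rat.num_ne_zero.2 hx))
      (Int.natAbs_ne_zero.2 (Rat.num_ne_zero.2 hy)),
    arithLogDeriv_mul (by simp) (by simp)]
  simp only [ratArithLogDeriv, Int.natAbs_natCast]
  ring

noncomputable def ratArithDeriv (q : ℚ) : ℚ := q * ratArithLogDeriv q

theorem ratArithDeriv_intCast (n : ℤ) : ratArithDeriv n = intArithDeriv n := by
  simp [ratArithDeriv, ratArithLogDeriv, intArithDeriv_eq_mul_arithLogDeriv, arithLogDeriv]

theorem ratArithDeriv_mul (x y : ℚ) :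
    ratArithDeriv (x * y) = ratArithDeriv x * y + x * ratArithDeriv y := by
  rcases eq_or_ne x 0 with rfl | hx
  · simp [ratArithDeriv]
  rcases eq_or_ne y 0 with rfl | hy
  · simp [ratArithDeriv]
  rw [ratArithDeriv, ratArithDeriv, ratArithDeriv, ratArithLogDeriv_mul hx hy]
  ring

/-- The formula `D (a/b) = (D a * b - a * D b) / b²` does not depend on the chosen
representation of the fraction; consequently there is a well-defined `D : ℚ → ℚ`
extending the arithmetic derivative on `ℤ` and satisfying the Leibniz rule. -/
theorem stmt_8 :
    (∀ a b c : ℤ, b ≠ 0 → c ≠ 0 →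
      ((intArithDeriv (a * c) : ℚ) * (b * c) - (a * c) * intArithDeriv (b * c)) /
          ((b * c : ℤ) : ℚ) ^ 2 =
        ((intArithDeriv a : ℚ) * b - a * intArithDeriv b) / (b : ℚ) ^ 2) ∧
    (∃ D : ℚ → ℚ, (∀ n : ℤ, D n = intArithDeriv n) ∧
      (∀ x y : ℚ, D (x * y) = D x * y + x * D y)) :=
  ⟨intArithDeriv_quotient_mul_right, ratArithDeriv, ratArithDeriv_intCast, ratArithDeriv_mul⟩
end

section
/- For every natural number m there exists a natural number N such that for every natural number n ≥ N, 2^m divides Λ(n). -/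
/-- `Λ n` is the smallest `m ≤ n` such that `D m = max (D 0, D 1, …, D n)`. -/
noncomputable def arithLambda (n : ℕ) : ℕ := sInf {m : ℕ | m ≤ n ∧ ∀ j ≤ n, arithDeriv j ≤ arithDeriv m}

/-!
Let `b = ⌊log₂ n⌋` and `L = Λ(n)`, with `α₂ = v₂(L)`. Since `2 ^ b ≤ n`, maximality gives
`D L ≥ D (2 ^ b) = b 2 ^ (b - 1)`, while `D L / L = Σ αₚ / p ≤ α₂ / 2 + (Ω L - α₂) / 3` and
`L < 2 ^ (b + 1)`, so `L` has many prime factors. On the other hand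
`2 ^ α₂ 3 ^ (Ω L - α₂) ≤ L < 2 ^ (b + 1)` leaves little room for odd ones, and together the two
bounds force `b ≤ 10 α₂ + 4`.
-/

open ArithmeticFunction ArithmeticFunction.Omega

lemma cardFactors_eq_sum_primeFactors (n : ℕ) :
    Ω n = ∑ p ∈ n.primeFactors, n.factorization p := by
  rw [cardFactors_eq_sum_factorization, Finsupp.sum, Nat.support_factorization]

lemma arithDeriv_prime_pow {p : ℕ} (hp : p.Prime) (k : ℕ) :
    arithDeriv (p ^ k) = k * p ^ (k - 1) := by
  rcases k.eq_zero_or_pos with rfl | hk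
  · simp [arithDeriv]
  rw [arithDeriv, Nat.primeFactors_prime_pow hk.ne' hp, Finset.sum_singleton,
    hp.factorization_pow, Finsupp.single_eq_same, Nat.pow_sub_one hp.ne_zero hk.ne']

lemma arithLambda_spec (n : ℕ) :
    arithLambda n ≤ n ∧ ∀ j ≤ n, arithDeriv j ≤ arithDeriv (arithLambda n) := by
  obtain ⟨k, hk, hmax⟩ := (Finset.Iic n).exists_max_image arithDeriv Finset.nonempty_Iic
  exact Nat.sInf_mem (s := {m | m ≤ n ∧ ∀ j ≤ n, arithDeriv j ≤ arithDeriv m})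
    ⟨k, Finset.mem_Iic.mp hk, fun j hj => hmax j (Finset.mem_Iic.mpr hj)⟩

/-- `D j / j = Σ αₚ / p`, and `1/p ≤ 1/3` except at `p = 2`. -/
lemma six_mul_arithDeriv_le (j : ℕ) :
    6 * arithDeriv j ≤ j * (j.factorization 2 + 2 * Ω j) := by
  have hterm : ∀ p ∈ j.primeFactors, 6 * (j.factorization p * (j / p)) ≤
      j * ((if p = 2 then j.factorization p else 0) + 2 * j.factorization p) := by
    intro p hp
    have hprime := Nat.prime_of_mem_primeFactors hp
    have hdiv : p * (j / p) ≤ j := Nat.mul_div_le j p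
    split_ifs with h2
    · subst h2; nlinarith
    · have h3 : 3 * (j / p) ≤ j :=
        (Nat.mul_le_mul_right _ (by have := hprime.two_le; omega)).trans hdiv
      nlinarith
  have hfactorization_two :
      ∑ p ∈ j.primeFactors, (if p = 2 then j.factorization p else 0) ≤ j.factorization 2 := by
    rw [Finset.sum_ite_eq']; split_ifs <;> simp
  calc 6 * arithDeriv j
      ≤ ∑ p ∈ j.primeFactors,
          j * ((if p = 2 then j.factorization p else 0) + 2 * j.factorization p) := by
        rw [arithDeriv, Finset.mul_sum]; exact Finset.sum_le_sum hterm
    _ ≤ j * (j.factorization 2 + 2 * Ω j) := by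
        rw [← Finset.mul_sum, Finset.sum_add_distrib, ← Finset.mul_sum,
          cardFactors_eq_sum_primeFactors]
        gcongr

/-- Prime by prime, `8 ≤ p ^ 2` for odd `p`, while `8 = 2 ^ 2 * 2` at `p = 2`. -/
lemma two_pow_three_mul_cardFactors_le {j : ℕ} (hj : j ≠ 0) :
    2 ^ (3 * Ω j) ≤ j ^ 2 * 2 ^ j.factorization 2 := by
  have hfactor : ∀ p ∈ j.primeFactors, 8 ^ j.factorization p ≤
      (p ^ 2) ^ j.factorization p * (if p = 2 then 2 ^ j.factorization p else 1) := by
    intro p hp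
    have hprime := Nat.prime_of_mem_primeFactors hp
    have h8 : 8 ≤ p ^ 2 * (if p = 2 then 2 else 1) := by
      split_ifs with h2
      · subst h2; norm_num
      · have : 3 ≤ p := by have := hprime.two_le; omega
        nlinarith
    calc 8 ^ j.factorization p
        ≤ (p ^ 2 * (if p = 2 then 2 else 1)) ^ j.factorization p := by gcongr
      _ = _ := by rw [mul_pow, ite_pow, one_pow]
  have hfactorization_two : ∏ p ∈ j.primeFactors,
      (if p = 2 then 2 ^ j.factorization p else 1) ≤ 2 ^ j.factorization 2 := by
    rw [Finset.prod_ite_eq']; split_ifs <;> simp [Nat.one_le_two_pow]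
  have hsquare : ∏ p ∈ j.primeFactors, (p ^ 2) ^ j.factorization p = j ^ 2 := by
    simp only [pow_right_comm _ 2, Finset.prod_pow, ← Nat.prod_primeFactors_pow_factorization hj]
  calc 2 ^ (3 * Ω j) = ∏ p ∈ j.primeFactors, 8 ^ j.factorization p := by
        rw [Finset.prod_pow_eq_pow_sum, ← cardFactors_eq_sum_primeFactors, pow_mul]; norm_num
    _ ≤ ∏ p ∈ j.primeFactors,
          (p ^ 2) ^ j.factorization p * (if p = 2 then 2 ^ j.factorization p else 1) :=
        Finset.prod_le_prod' hfactor
    _ ≤ j ^ 2 * 2 ^ j.factorization 2 := by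
        rw [Finset.prod_mul_distrib, hsquare]
        gcongr

/-- Eliminating `Ω L` between the upper bound on `D L` and the lower bound on `L`. -/
lemma le_ten_mul_factorization_two_add_four {L b : ℕ} (hL : L < 2 ^ (b + 1))
    (hD : arithDeriv (2 ^ b) ≤ arithDeriv L) : b ≤ 10 * L.factorization 2 + 4 := by
  rw [arithDeriv_prime_pow Nat.prime_two] at hD
  rcases Nat.eq_zero_or_pos b with rfl | hb
  · omega
  have hL0 : L ≠ 0 := by
    rintro rfl
    simp [arithDeriv, hb.ne'] at hD
  have hpow : 2 ^ (b + 1) = 4 * 2 ^ (b - 1) := by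
    rw [show b + 1 = 2 + (b - 1) by omega, pow_add]; rfl
  have hderiv : 3 * b ≤ 2 * L.factorization 2 + 4 * Ω L := by
    have : 6 * b * 2 ^ (b - 1) ≤ 4 * (L.factorization 2 + 2 * Ω L) * 2 ^ (b - 1) :=
      calc 6 * b * 2 ^ (b - 1) = 6 * (b * 2 ^ (b - 1)) := by ring
        _ ≤ 6 * arithDeriv L := by gcongr
        _ ≤ L * (L.factorization 2 + 2 * Ω L) := six_mul_arithDeriv_le L
        _ ≤ 2 ^ (b + 1) * (L.factorization 2 + 2 * Ω L) := by gcongr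
        _ = 4 * (L.factorization 2 + 2 * Ω L) * 2 ^ (b - 1) := by rw [hpow]; ring
    have := Nat.le_of_mul_le_mul_right this (Nat.two_pow_pos _)
    omega
  have hsize : 3 * Ω L < 2 * b + 2 + L.factorization 2 := by
    refine (Nat.pow_lt_pow_iff_right one_lt_two).mp ?_
    calc 2 ^ (3 * Ω L) ≤ L ^ 2 * 2 ^ L.factorization 2 := two_pow_three_mul_cardFactors_le hL0
      _ < (2 ^ (b + 1)) ^ 2 * 2 ^ L.factorization 2 := by gcongr
      _ = 2 ^ (2 * b + 2 + L.factorization 2) := by ring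
  omega

/-- For every `m` there is `N` such that `2^m ∣ Λ n` for all `n ≥ N`. -/
theorem stmt_18 (m : ℕ) : ∃ N : ℕ, ∀ n : ℕ, N ≤ n → 2 ^ m ∣ arithLambda n := by
  refine ⟨2 ^ (10 * m + 4), fun n hn => ?_⟩
  obtain ⟨hLn, hLmax⟩ := arithLambda_spec n
  have hn0 : n ≠ 0 := (Nat.two_pow_pos _).trans_le hn |>.ne'
  have hlog : 10 * m + 4 ≤ Nat.log 2 n := Nat.le_log_of_pow_le one_lt_two hn
  have hv := le_ten_mul_factorization_two_add_four
    (hLn.trans_lt (Nat.lt_pow_succ_log_self one_lt_two n))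
    (hLmax _ (Nat.pow_log_le_self 2 hn0))
  exact (pow_dvd_pow 2 (by omega)).trans (Nat.ordProj_dvd _ 2)
end
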